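/- arXiv:2307.12504 — 3 statements merged into one kernel-verified Lean document; each statement's English description precedes it below -/
import Mathlib

section
/- Let Γ = (Γ_ij) ∈ ℝ^{3×3} be symmetric with Γ_11 > 0, Γ_12 ≥ 0, Γ_13 ≥ 0, and let p : [0,∞)^3 → ℝ be nondecreasing in its first variable. Define e_0(m) = p(m_1,m_2,m_3) + (1/(4π)) Σ_{i,j=1}^3 Γ_ij m_i m_j and e_0^s(t) = 2√(π t) + Γ_11 t^2/(4π). If m = (m_1,m_2,m_3) ∈ [0,∞)^3 satisfies the minimality inequality e_0(m_1,m_2,m_3) ≤ e_0(m_1/2, m_2, m_3) + e_0^s(m_1/2), then m_1 ≤ 8π / Γ_11^{2/3}. -/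
open scoped BigOperators

set_option maxHeartbeats 1000000

/-- Lemma "max mass" (abstract form): if splitting half of the first lobe off as a
separate single bubble does not decrease the energy, then `m 0 ≤ 8π / Γ₁₁^(2/3)`. -/
theorem max_mass
    (Γ : Fin 3 → Fin 3 → ℝ)
    (hΓsymm : ∀ a b, Γ a b = Γ b a)
    (hΓ11 : 0 < Γ 0 0) (hΓ12 : 0 ≤ Γ 0 1) (hΓ13 : 0 ≤ Γ 0 2)
    (p : (Fin 3 → ℝ) → ℝ)
    (hp : ∀ m : Fin 3 → ℝ, (∀ j, 0 ≤ m j) → ∀ s t : ℝ, 0 ≤ s → s ≤ t → t ≤ m 0 →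
      p (Function.update m 0 s) ≤ p (Function.update m 0 t))
    (e₀ : (Fin 3 → ℝ) → ℝ)
    (he₀ : ∀ m : Fin 3 → ℝ,
      e₀ m = p m + (1 / (4 * Real.pi)) * ∑ i, ∑ j, Γ i j * m i * m j)
    (e₀s : ℝ → ℝ)
    (he₀s : ∀ t : ℝ, e₀s t = 2 * Real.sqrt (Real.pi * t) + Γ 0 0 * t ^ 2 / (4 * Real.pi))
    (m : Fin 3 → ℝ) (hm : ∀ j, 0 ≤ m j)
    (hmin : e₀ m ≤ e₀ (Function.update m 0 (m 0 / 2)) + e₀s (m 0 / 2)) :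
    m 0 ≤ 8 * Real.pi / (Γ 0 0) ^ ((2 : ℝ) / 3) := by
  have hπ : (0:ℝ) < Real.pi := Real.pi_pos
  have ha0 : 0 ≤ m 0 := hm 0
  have hb0 : 0 ≤ m 1 := hm 1
  have hc0 : 0 ≤ m 2 := hm 2
  have hm'0 : Function.update m 0 (m 0 / 2) 0 = m 0 / 2 := by simp
  have hm'1 : Function.update m 0 (m 0 / 2) 1 = m 1 := by simp
  have hm'2 : Function.update m 0 (m 0 / 2) 2 = m 2 := by simp
  -- monotonicity of p
  have hpmono : p (Function.update m 0 (m 0 / 2)) ≤ p m := by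
    have := hp m hm (m 0 / 2) (m 0) (by linarith) (by linarith) le_rfl
    simpa [Function.update_eq_self] using this
  -- square root term
  have hs0 : 0 ≤ Real.sqrt (Real.pi * (m 0 / 2)) := Real.sqrt_nonneg _
  have hs2 : Real.sqrt (Real.pi * (m 0 / 2)) ^ 2 = Real.pi * (m 0 / 2) := by
    rw [Real.sq_sqrt (by positivity)]
  set s := Real.sqrt (Real.pi * (m 0 / 2)) with hs
  -- extract the key inequality Γ00 (m 0)² ≤ 16 π s
  have h1 := hmin
  rw [he₀ m, he₀ (Function.update m 0 (m 0 / 2)), he₀s] at h1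
  simp only [Fin.sum_univ_three, hm'0, hm'1, hm'2] at h1
  rw [hΓsymm 1 0, hΓsymm 2 0] at h1
  have h3 : (0:ℝ) ≤ (1 / (4 * Real.pi)) * (Γ 0 1 * m 0 * m 1) := by positivity
  have h4 : (0:ℝ) ≤ (1 / (4 * Real.pi)) * (Γ 0 2 * m 0 * m 2) := by positivity
  have h2 : (1 / (4 * Real.pi)) * ((3/4) * Γ 0 0 * m 0 ^ 2)
      ≤ 2 * s + (1 / (4 * Real.pi)) * (Γ 0 0 * (m 0 / 2) ^ 2) := by
    have hdiv : Γ 0 0 * (m 0 / 2) ^ 2 / (4 * Real.pi)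
        = (1 / (4 * Real.pi)) * (Γ 0 0 * (m 0 / 2) ^ 2) := by ring
    rw [hdiv] at h1
    nlinarith [h1, hpmono, h3, h4]
  have hkey : Γ 0 0 * m 0 ^ 2 ≤ 16 * Real.pi * s := by
    have h6 := mul_le_mul_of_nonneg_left h2 (by positivity : (0:ℝ) ≤ 4 * Real.pi)
    have hne : (4 * Real.pi) ≠ 0 := by positivity
    have e1 : 4 * Real.pi * ((1 / (4 * Real.pi)) * ((3/4) * Γ 0 0 * m 0 ^ 2))
        = (3/4) * Γ 0 0 * m 0 ^ 2 := by field_simp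
    have e2 : 4 * Real.pi * (2 * s + (1 / (4 * Real.pi)) * (Γ 0 0 * (m 0 / 2) ^ 2))
        = 8 * Real.pi * s + Γ 0 0 * (m 0 / 2) ^ 2 := by field_simp; ring
    rw [e1, e2] at h6
    linarith [h6]
  -- squared version
  have hsq : Γ 0 0 ^ 2 * m 0 ^ 4 ≤ 128 * Real.pi ^ 3 * m 0 := by
    have h8 := mul_le_mul hkey hkey (by positivity) (by positivity : (0:ℝ) ≤ 16 * Real.pi * s)
    have e4 : 16 * Real.pi * s * (16 * Real.pi * s) = 256 * Real.pi ^ 2 * s ^ 2 := by ring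
    rw [e4, hs2] at h8
    have e5 : Γ 0 0 * m 0 ^ 2 * (Γ 0 0 * m 0 ^ 2) = Γ 0 0 ^ 2 * m 0 ^ 4 := by ring
    rw [e5] at h8
    linarith [h8]
  rcases eq_or_lt_of_le ha0 with h0 | h0
  · rw [← h0]
    positivity
  · -- m 0 > 0
    have hcube : Γ 0 0 ^ 2 * m 0 ^ 3 ≤ 128 * Real.pi ^ 3 := by
      have h7 : Γ 0 0 ^ 2 * m 0 ^ 3 * m 0 ≤ 128 * Real.pi ^ 3 * m 0 := by
        have : Γ 0 0 ^ 2 * m 0 ^ 3 * m 0 = Γ 0 0 ^ 2 * m 0 ^ 4 := by ring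
        linarith [this, hsq]
      exact le_of_mul_le_mul_right h7 h0
    have hxpos : 0 < Γ 0 0 ^ ((2:ℝ)/3) := Real.rpow_pos_of_pos hΓ11 _
    have hx3 : (Γ 0 0 ^ ((2:ℝ)/3)) ^ (3:ℕ) = Γ 0 0 ^ (2:ℕ) := by
      rw [← Real.rpow_natCast (Γ 0 0 ^ ((2:ℝ)/3)) 3, ← Real.rpow_mul hΓ11.le]
      rw [show ((2:ℝ)/3) * ((3:ℕ):ℝ) = ((2:ℕ):ℝ) by push_cast; ring, Real.rpow_natCast]
    have hfin : (Γ 0 0 ^ ((2:ℝ)/3) * m 0) ^ (3:ℕ) ≤ (8 * Real.pi) ^ (3:ℕ) := by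
      have e3 : (Γ 0 0 ^ ((2:ℝ)/3) * m 0) ^ (3:ℕ) = Γ 0 0 ^ 2 * m 0 ^ 3 := by
        rw [mul_pow, hx3]
      rw [e3]
      nlinarith [pow_pos hπ 3]
    have hle : Γ 0 0 ^ ((2:ℝ)/3) * m 0 ≤ 8 * Real.pi :=
      le_of_pow_le_pow_left₀ (by norm_num) (by positivity) hfin
    rw [le_div_iff₀ hxpos]
    linarith [hle]
end

section
/- Let 0 < c_1 ≤ c_2 and c > 0 with c^2 ≤ 4π, let n ≥ 1 be an integer, and let m_1, …, m_n > 0 satisfy min_k m_k ≥ (c_1/(4 c_2)) · max_k m_k. Assume B := (c^2 − 4π) + c^2 (n−1) c_1/(4 c_2) ≥ 0. Then c Σ_{k=1}^n √(m_k) − 2 √(π Σ_{k=1}^n m_k) ≥ B · (c + 2√(π/n))^{-1} · √(max_k m_k). -/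
open scoped BigOperators

set_option maxHeartbeats 1000000 in
/-- Lower bound on the perimeter change when merging `n` single bubbles into one:
`c Σ √(m k) − 2 √(π Σ m k) ≥ B (c + 2√(π/n))⁻¹ √(max m k)`. -/
theorem perimeter_change_lower_bound
    (c₁ c₂ c : ℝ) (hc₁ : 0 < c₁) (hc₁₂ : c₁ ≤ c₂) (hc : 0 < c)
    (hc4 : c ^ 2 ≤ 4 * Real.pi)
    (n : ℕ) (hn : 1 ≤ n)
    (m : Fin n → ℝ) (hm : ∀ k, 0 < m k)
    (hratio : ∀ k l, (c₁ / (4 * c₂)) * m l ≤ m k)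
    (hB : 0 ≤ (c ^ 2 - 4 * Real.pi) + c ^ 2 * ((n : ℝ) - 1) * c₁ / (4 * c₂)) :
    ∀ k₀ : Fin n, (∀ l, m l ≤ m k₀) →
      ((c ^ 2 - 4 * Real.pi) + c ^ 2 * ((n : ℝ) - 1) * c₁ / (4 * c₂)) *
          (c + 2 * Real.sqrt (Real.pi / n))⁻¹ * Real.sqrt (m k₀)
        ≤ c * ∑ k, Real.sqrt (m k) - 2 * Real.sqrt (Real.pi * ∑ k, m k) := by
  intro k₀ hk₀
  have hc₂ : 0 < c₂ := lt_of_lt_of_le hc₁ hc₁₂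
  have hpi : (0:ℝ) < Real.pi := Real.pi_pos
  set M := m k₀ with hMdef
  have hM : 0 < M := hm k₀
  set r : ℝ := c₁ / (4 * c₂) with hrdef
  have hr : 0 < r := by positivity
  have hrm : ∀ k, r * M ≤ m k := fun k => hratio k k₀
  set S := ∑ k, Real.sqrt (m k) with hSdef
  set T := ∑ k, m k with hTdef
  have hne : (Finset.univ : Finset (Fin n)).Nonempty := by
    have : 0 < n := hn
    simpa [Finset.univ_nonempty_iff] using Fin.pos_iff_nonempty.mp this
  have hT : 0 < T := Finset.sum_pos (fun k _ => hm k) hne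
  have hnR : (1:ℝ) ≤ (n:ℝ) := by exact_mod_cast hn
  have hcard : (Finset.univ : Finset (Fin n)).card = n := by simp
  -- T ≤ n M
  have hTn : T ≤ (n:ℝ) * M := by
    calc T ≤ ∑ _k : Fin n, M := Finset.sum_le_sum (fun k _ => hk₀ k)
    _ = (n:ℝ) * M := by simp [Finset.sum_const, hcard]
  -- S ≤ n √M
  have hSn : S ≤ (n:ℝ) * Real.sqrt M := by
    calc S ≤ ∑ _k : Fin n, Real.sqrt M :=
          Finset.sum_le_sum (fun k _ => Real.sqrt_le_sqrt (hk₀ k))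
    _ = (n:ℝ) * Real.sqrt M := by simp [Finset.sum_const, hcard]
  -- lower bound pieces
  have hsqrtl : ∀ k, Real.sqrt (r * M) ≤ Real.sqrt (m k) :=
    fun k => Real.sqrt_le_sqrt (hrm k)
  have hrM : Real.sqrt (r * M) * Real.sqrt (r * M) = r * M :=
    Real.mul_self_sqrt (by positivity)
  -- S² ≥ T + n(n-1) r M
  have hSsq : T + (n:ℝ) * ((n:ℝ) - 1) * (r * M) ≤ S ^ 2 := by
    have hterm : ∀ k : Fin n,
        m k + ((n:ℝ) - 1) * (r * M) ≤ Real.sqrt (m k) * S := by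
      intro k
      have hsplit : S = Real.sqrt (m k) + ∑ h ∈ Finset.univ.erase k, Real.sqrt (m h) := by
        rw [hSdef, ← Finset.add_sum_erase _ _ (Finset.mem_univ k)]
      have herase : ((n:ℝ) - 1) * Real.sqrt (r * M)
          ≤ ∑ h ∈ Finset.univ.erase k, Real.sqrt (m h) := by
        calc ((n:ℝ) - 1) * Real.sqrt (r * M)
            = ∑ _h ∈ Finset.univ.erase k, Real.sqrt (r * M) := by
              rw [Finset.sum_const, Finset.card_erase_of_mem (Finset.mem_univ k),
                hcard, nsmul_eq_mul, Nat.cast_sub hn]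
              push_cast; ring
          _ ≤ _ := Finset.sum_le_sum (fun h _ => hsqrtl h)
      have hE0 : (0:ℝ) ≤ ∑ h ∈ Finset.univ.erase k, Real.sqrt (m h) :=
        Finset.sum_nonneg (fun h _ => Real.sqrt_nonneg _)
      have h1 : Real.sqrt (r * M) ≤ Real.sqrt (m k) := hsqrtl k
      have h2 : Real.sqrt (m k) * Real.sqrt (m k) = m k := Real.mul_self_sqrt (hm k).le
      have h3 : (0:ℝ) ≤ Real.sqrt (r * M) := Real.sqrt_nonneg _
      have ha : Real.sqrt (r * M) * (((n:ℝ) - 1) * Real.sqrt (r * M))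
          ≤ Real.sqrt (r * M) * ∑ h ∈ Finset.univ.erase k, Real.sqrt (m h) :=
        mul_le_mul_of_nonneg_left herase h3
      have hb : Real.sqrt (r * M) * ∑ h ∈ Finset.univ.erase k, Real.sqrt (m h)
          ≤ Real.sqrt (m k) * ∑ h ∈ Finset.univ.erase k, Real.sqrt (m h) :=
        mul_le_mul_of_nonneg_right h1 hE0
      rw [hsplit]
      nlinarith [ha, hb]
    calc T + (n:ℝ) * ((n:ℝ) - 1) * (r * M)
        = ∑ k : Fin n, (m k + ((n:ℝ) - 1) * (r * M)) := by
          rw [Finset.sum_add_distrib, Finset.sum_const, hcard, nsmul_eq_mul]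
          push_cast
          ring
      _ ≤ ∑ k : Fin n, Real.sqrt (m k) * S := Finset.sum_le_sum (fun k _ => hterm k)
      _ = S ^ 2 := by rw [← Finset.sum_mul]; ring
  set B : ℝ := (c ^ 2 - 4 * Real.pi) + c ^ 2 * ((n:ℝ) - 1) * c₁ / (4 * c₂) with hBdef
  have hBr : B = (c ^ 2 - 4 * Real.pi) + c ^ 2 * ((n:ℝ) - 1) * r := by
    rw [hBdef, hrdef]; ring
  set A := c * S with hAdef
  set E := 2 * Real.sqrt (Real.pi * T) with hEdef
  have hE2 : E ^ 2 = 4 * (Real.pi * T) := by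
    rw [hEdef, mul_pow, Real.sq_sqrt (by positivity)]; ring
  have hSpos : 0 < S := by
    have h1 : Real.sqrt M ≤ S :=
      Finset.single_le_sum (f := fun k => Real.sqrt (m k))
        (fun k _ => Real.sqrt_nonneg _) (Finset.mem_univ k₀)
    exact lt_of_lt_of_le (Real.sqrt_pos.mpr hM) h1
  have hApos : 0 < A := by positivity
  have hEpos : 0 < E := by rw [hEdef]; positivity
  have hAE : 0 < A + E := by linarith
  -- numerator bound: n M B ≤ A² − E²
  have hnum : (n:ℝ) * M * B ≤ A ^ 2 - E ^ 2 := by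
    have h1 : (c ^ 2 - 4 * Real.pi) * ((n:ℝ) * M) ≤ (c ^ 2 - 4 * Real.pi) * T :=
      mul_le_mul_of_nonpos_left hTn (by linarith)
    have h2 : c ^ 2 * (T + (n:ℝ) * ((n:ℝ) - 1) * (r * M)) ≤ c ^ 2 * S ^ 2 :=
      mul_le_mul_of_nonneg_left hSsq (by positivity)
    have e0 : (n:ℝ) * M * ((c ^ 2 - 4 * Real.pi) + c ^ 2 * ((n:ℝ) - 1) * r)
        = (c ^ 2 - 4 * Real.pi) * ((n:ℝ) * M)
          + c ^ 2 * ((n:ℝ) * ((n:ℝ) - 1) * (r * M)) := by ring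
    have e1 : A ^ 2 = c ^ 2 * S ^ 2 := by rw [hAdef]; ring
    rw [hE2, hBr, e0, e1]
    linarith [h1, h2]
  -- denominator bound
  set D := c + 2 * Real.sqrt (Real.pi / n) with hDdef
  have hD : 0 < D := by rw [hDdef]; positivity
  have hsqM : Real.sqrt M * Real.sqrt M = M := Real.mul_self_sqrt hM.le
  have hden : A + E ≤ (n:ℝ) * Real.sqrt M * D := by
    have h1 : A ≤ c * ((n:ℝ) * Real.sqrt M) :=
      mul_le_mul_of_nonneg_left hSn hc.le
    have h2 : Real.sqrt (Real.pi * T) ≤ Real.sqrt (Real.pi / n) * ((n:ℝ) * Real.sqrt M) := by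
      rw [← Real.sqrt_sq (by positivity : (0:ℝ) ≤ (n:ℝ) * Real.sqrt M),
        ← Real.sqrt_mul (by positivity)]
      apply Real.sqrt_le_sqrt
      have hn0 : (0:ℝ) < (n:ℝ) := by linarith
      have e2 : Real.pi / n * ((n:ℝ) * Real.sqrt M) ^ 2 = Real.pi * ((n:ℝ) * M) := by
        have e3 : ((n:ℝ) * Real.sqrt M) ^ 2 = (n:ℝ) ^ 2 * M := by
          rw [mul_pow, sq (Real.sqrt M), hsqM]
        rw [e3]
        field_simp
      rw [e2]
      exact mul_le_mul_of_nonneg_left hTn hpi.le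
    calc A + E ≤ c * ((n:ℝ) * Real.sqrt M)
          + 2 * (Real.sqrt (Real.pi / n) * ((n:ℝ) * Real.sqrt M)) := by
          rw [hEdef]; linarith [h1, h2]
      _ = (n:ℝ) * Real.sqrt M * D := by rw [hDdef]; ring
  -- conclude
  have hnumpos : (0:ℝ) ≤ (n:ℝ) * M * B :=
    mul_nonneg (by positivity) hB
  have key : B * D⁻¹ * Real.sqrt M ≤ (A ^ 2 - E ^ 2) / (A + E) := by
    have h0 : B * D⁻¹ * Real.sqrt M = (n:ℝ) * M * B / ((n:ℝ) * Real.sqrt M * D) := by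
      rw [eq_div_iff (by positivity)]
      have hDD : D⁻¹ * D = 1 := inv_mul_cancel₀ hD.ne'
      calc B * D⁻¹ * Real.sqrt M * ((n:ℝ) * Real.sqrt M * D)
          = (n:ℝ) * (Real.sqrt M * Real.sqrt M) * B * (D⁻¹ * D) := by ring
        _ = (n:ℝ) * M * B := by rw [hsqM, hDD]; ring
    rw [h0]
    exact div_le_div₀ (by linarith [hnum, hnumpos]) hnum hAE hden
  have hfin : (A ^ 2 - E ^ 2) / (A + E) = A - E := by
    rw [div_eq_iff hAE.ne']; ring
  calc B * D⁻¹ * Real.sqrt M ≤ A - E := key.trans_eq hfin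
    _ = c * S - 2 * Real.sqrt (Real.pi * T) := by rw [hAdef, hEdef]
end

section
/- Let Γ > 0, let 0 < c_1 ≤ c_2 and c > 0 with c^2 ≤ 4π, let n ≥ 2 be an integer, and let m_1, …, m_n > 0 satisfy min_k m_k ≥ (c_1/(4 c_2)) · max_k m_k. Assume B := (c^2 − 4π) + c^2 (n−1) c_1/(4 c_2) ≥ 0, and assume the minimality inequality Σ_{k=1}^n [ c √(m_k) + Γ m_k^2/(4π) ] ≤ (Γ/(4π)) (Σ_{k=1}^n m_k)^2 + 2 √(π Σ_{k=1}^n m_k). Then (max_k m_k)^{3/2} ≥ 4π B / ( n (n−1) Γ (c + 2√(π/n)) ). -/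
open scoped BigOperators

set_option maxHeartbeats 1000000 in
/-- Concluding estimate in the proof of Lemma "independent mass": the minimality
inequality `E⁻ ≤ E⁺` forces a lower bound on `(max m k)^(3/2)`. -/
theorem independent_mass_estimate
    (Γ c₁ c₂ c : ℝ) (hΓ : 0 < Γ)
    (hc₁ : 0 < c₁) (hc₁₂ : c₁ ≤ c₂) (hc : 0 < c)
    (hc4 : c ^ 2 ≤ 4 * Real.pi)
    (n : ℕ) (hn : 2 ≤ n)
    (m : Fin n → ℝ) (hm : ∀ k, 0 < m k)
    (hratio : ∀ k l, (c₁ / (4 * c₂)) * m l ≤ m k)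
    (hB : 0 ≤ (c ^ 2 - 4 * Real.pi) + c ^ 2 * ((n : ℝ) - 1) * c₁ / (4 * c₂))
    (hmin : ∑ k, (c * Real.sqrt (m k) + Γ * (m k) ^ 2 / (4 * Real.pi))
        ≤ (Γ / (4 * Real.pi)) * (∑ k, m k) ^ 2 + 2 * Real.sqrt (Real.pi * ∑ k, m k)) :
    ∀ k₀ : Fin n, (∀ l, m l ≤ m k₀) →
      4 * Real.pi * ((c ^ 2 - 4 * Real.pi) + c ^ 2 * ((n : ℝ) - 1) * c₁ / (4 * c₂)) /
          ((n : ℝ) * ((n : ℝ) - 1) * Γ * (c + 2 * Real.sqrt (Real.pi / n)))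
        ≤ (m k₀) ^ ((3 : ℝ) / 2) := by
  intro k₀ hk₀
  have hπ : 0 < Real.pi := Real.pi_pos
  have hc₂ : 0 < c₂ := lt_of_lt_of_le hc₁ hc₁₂
  set M : ℝ := m k₀ with hM_def
  have hM : 0 < M := hm k₀
  set S : ℝ := ∑ k, m k with hS_def
  set a : Fin n → ℝ := fun k => Real.sqrt (m k) with ha_def
  set T : ℝ := ∑ k, a k with hT_def
  set r : ℝ := c₁ / (4 * c₂) with hr_def
  have hr : 0 < r := by positivity
  set b : ℝ := Real.sqrt (r * M) with hb_def
  have hb0 : 0 ≤ b := Real.sqrt_nonneg _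
  have hb2 : b ^ 2 = r * M := Real.sq_sqrt (by positivity)
  have ha0 : ∀ k, 0 ≤ a k := fun k => Real.sqrt_nonneg _
  have ha2 : ∀ k, a k ^ 2 = m k := fun k => Real.sq_sqrt (hm k).le
  have hba : ∀ k, b ≤ a k := fun k => Real.sqrt_le_sqrt (hratio k k₀)
  have haM : ∀ k, a k ≤ Real.sqrt M := fun k => Real.sqrt_le_sqrt (hk₀ k)
  have hsqM : 0 < Real.sqrt M := Real.sqrt_pos.mpr hM
  have hn1 : (1:ℝ) ≤ (n:ℝ) := by exact_mod_cast le_trans (by norm_num) hn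
  have hn2 : (2:ℝ) ≤ (n:ℝ) := by exact_mod_cast hn
  have hnR : (0:ℝ) < (n:ℝ) := by linarith
  have hms : ∀ k, m k ≤ S := fun k =>
    Finset.single_le_sum (fun l _ => (hm l).le) (Finset.mem_univ k)
  have hS : 0 < S := lt_of_lt_of_le (hm k₀) (hms k₀)
  have hT0 : 0 ≤ T := Finset.sum_nonneg (fun k _ => ha0 k)
  -- erase-sum facts
  have hcard : ∀ k : Fin n, (((Finset.univ).erase k).card : ℝ) = (n:ℝ) - 1 := by
    intro k
    rw [Finset.card_erase_of_mem (Finset.mem_univ k)]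
    simp only [Finset.card_univ, Fintype.card_fin]
    have : 1 ≤ n := le_trans (by norm_num) hn
    push_cast [Nat.cast_sub this]
    ring
  have herase : ∀ (f : Fin n → ℝ) (k : Fin n),
      ∑ l ∈ (Finset.univ).erase k, f l = (∑ l, f l) - f k := by
    intro f k
    have := Finset.sum_erase_add Finset.univ f (Finset.mem_univ k)
    linarith
  have hTa : ∀ k, ((n:ℝ) - 1) * b ≤ T - a k := by
    intro k
    have h := Finset.card_nsmul_le_sum ((Finset.univ).erase k) a b
      (fun l _ => hba l)
    rw [nsmul_eq_mul, herase a k, hcard k] at h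
    exact h
  have hSm : ∀ k, S - m k ≤ ((n:ℝ) - 1) * M := by
    intro k
    have h := Finset.sum_le_card_nsmul ((Finset.univ).erase k) m M
      (fun l _ => hk₀ l)
    rw [nsmul_eq_mul, herase m k, hcard k] at h
    exact h
  have hTnM : T ≤ (n:ℝ) * Real.sqrt M := by
    have h := Finset.sum_le_card_nsmul Finset.univ a (Real.sqrt M) (fun l _ => haM l)
    simpa [Finset.card_univ, nsmul_eq_mul] using h
  have hSnM : S ≤ (n:ℝ) * M := by
    have h := Finset.sum_le_card_nsmul Finset.univ m M (fun l _ => hk₀ l)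
    simpa [Finset.card_univ, nsmul_eq_mul] using h
  -- Step A1 : T^2 ≥ S + n(n-1) r M
  have hA1 : S + (n:ℝ) * ((n:ℝ) - 1) * (r * M) ≤ T ^ 2 := by
    have hkey : ∑ k, (a k * (T - a k)) = T ^ 2 - S := by
      have h1 : ∀ k, a k * (T - a k) = a k * T - m k := by
        intro k
        rw [← ha2 k]; ring
      calc ∑ k, (a k * (T - a k)) = ∑ k, (a k * T - m k) :=
            Finset.sum_congr rfl (fun k _ => h1 k)
        _ = (∑ k, a k) * T - S := by
            rw [Finset.sum_sub_distrib, Finset.sum_mul]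
        _ = T ^ 2 - S := by rw [← hT_def]; ring
    have hterm : ∀ k, ((n:ℝ) - 1) * (r * M) ≤ a k * (T - a k) := by
      intro k
      have h1 : b * (((n:ℝ) - 1) * b) ≤ a k * (T - a k) :=
        mul_le_mul (hba k) (hTa k) (mul_nonneg (by linarith) hb0) (ha0 k)
      calc ((n:ℝ) - 1) * (r * M) = b * (((n:ℝ) - 1) * b) := by
            rw [← hb2]; ring
        _ ≤ a k * (T - a k) := h1
    have hsum := Finset.card_nsmul_le_sum Finset.univ (fun k => a k * (T - a k))
      (((n:ℝ) - 1) * (r * M)) (fun k _ => hterm k)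
    rw [hkey] at hsum
    simp only [Finset.card_univ, Fintype.card_fin, nsmul_eq_mul] at hsum
    linarith
  -- Step A2 : c² T² - 4π S ≥ n M B
  set B : ℝ := (c ^ 2 - 4 * Real.pi) + c ^ 2 * ((n : ℝ) - 1) * c₁ / (4 * c₂) with hB_def
  have hA2 : (n:ℝ) * M * B ≤ c ^ 2 * T ^ 2 - 4 * Real.pi * S := by
    have h1 : c ^ 2 * (S + (n:ℝ) * ((n:ℝ) - 1) * (r * M)) ≤ c ^ 2 * T ^ 2 :=
      mul_le_mul_of_nonneg_left hA1 (by positivity)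
    have h2 : (c ^ 2 - 4 * Real.pi) * ((n:ℝ) * M) ≤ (c ^ 2 - 4 * Real.pi) * S := by
      apply mul_le_mul_of_nonpos_left hSnM (by linarith)
    have hBr : (n:ℝ) * M * B =
        (c ^ 2 - 4 * Real.pi) * ((n:ℝ) * M) + c ^ 2 * ((n:ℝ) * ((n:ℝ) - 1) * (r * M)) := by
      rw [hB_def, hr_def]; ring
    rw [hBr]
    linarith [h1, h2]
  -- Step B : rearranged minimality
  set Q : ℝ := ∑ k, (m k) ^ 2 with hQ_def
  set X : ℝ := Γ / (4 * Real.pi) * (S ^ 2 - Q) with hX_def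
  have hsplit : ∑ k, (c * Real.sqrt (m k) + Γ * (m k) ^ 2 / (4 * Real.pi))
      = c * T + Γ / (4 * Real.pi) * Q := by
    rw [Finset.sum_add_distrib]
    congr 1
    · rw [hT_def, Finset.mul_sum]
    · rw [hQ_def, Finset.mul_sum]
      exact Finset.sum_congr rfl (fun k _ => by ring)
  have hmin' : c * T - 2 * Real.sqrt (Real.pi * S) ≤ X := by
    rw [hsplit] at hmin
    rw [hX_def]
    have : Γ / (4 * Real.pi) * (S ^ 2 - Q)
        = Γ / (4 * Real.pi) * S ^ 2 - Γ / (4 * Real.pi) * Q := by ring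
    rw [this]
    linarith
  -- Step C : difference of squares
  set u : ℝ := Real.sqrt (Real.pi * S) with hu_def
  have hu0 : 0 ≤ u := Real.sqrt_nonneg _
  have hu2 : u ^ 2 = Real.pi * S := Real.sq_sqrt (by positivity)
  have hC : c ^ 2 * T ^ 2 - 4 * Real.pi * S = (c * T - 2 * u) * (c * T + 2 * u) := by
    linear_combination 4 * hu2
  -- Step D : X ≥ 0
  have hQS : Q ≤ S ^ 2 := by
    have h : ∀ k ∈ Finset.univ, (m k) ^ 2 ≤ m k * S := by
      intro k _
      nlinarith [hm k, hms k]
    calc Q ≤ ∑ k, m k * S := Finset.sum_le_sum h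
      _ = S ^ 2 := by rw [← Finset.sum_mul, ← hS_def]; ring
  have hX0 : 0 ≤ X := by
    rw [hX_def]
    apply mul_nonneg (by positivity)
    linarith
  -- Step F : X ≤ Γ/(4π) n(n-1) M²
  have hXle : X ≤ Γ / (4 * Real.pi) * ((n:ℝ) * ((n:ℝ) - 1) * M ^ 2) := by
    have hkey : ∑ k, (m k * (S - m k)) = S ^ 2 - Q := by
      calc ∑ k, (m k * (S - m k)) = ∑ k, (m k * S - (m k) ^ 2) :=
            Finset.sum_congr rfl (fun k _ => by ring)
        _ = (∑ k, m k) * S - Q := by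
            rw [Finset.sum_sub_distrib, Finset.sum_mul]
        _ = S ^ 2 - Q := by rw [← hS_def]; ring
    have hterm : ∀ k, m k * (S - m k) ≤ M * (((n:ℝ) - 1) * M) := by
      intro k
      apply mul_le_mul (hk₀ k) (hSm k) (by linarith [hms k]) hM.le
    have hsum := Finset.sum_le_card_nsmul Finset.univ (fun k => m k * (S - m k))
      (M * (((n:ℝ) - 1) * M)) (fun k _ => hterm k)
    rw [hkey] at hsum
    simp only [Finset.card_univ, Fintype.card_fin, nsmul_eq_mul] at hsum
    rw [hX_def]
    have h2 : S ^ 2 - Q ≤ (n:ℝ) * ((n:ℝ) - 1) * M ^ 2 := by linarith [hsum]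
    apply mul_le_mul_of_nonneg_left h2 (by positivity)
  -- Step E : upper bound for c T + 2u
  set t : ℝ := c + 2 * Real.sqrt (Real.pi / n) with ht_def
  have ht0 : 0 < t := by
    have : 0 ≤ Real.sqrt (Real.pi / n) := Real.sqrt_nonneg _
    rw [ht_def]; linarith
  have hE : c * T + 2 * u ≤ (n:ℝ) * Real.sqrt M * t := by
    have h1 : u ≤ (n:ℝ) * (Real.sqrt M * Real.sqrt (Real.pi / n)) := by
      have ha : u ≤ Real.sqrt (Real.pi * ((n:ℝ) * M)) := by
        apply Real.sqrt_le_sqrt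
        exact mul_le_mul_of_nonneg_left hSnM hπ.le
      have hbb : Real.sqrt (Real.pi * ((n:ℝ) * M))
          = (n:ℝ) * (Real.sqrt M * Real.sqrt (Real.pi / n)) := by
        rw [show Real.pi * ((n:ℝ) * M) = (M * (Real.pi / (n:ℝ))) * ((n:ℝ)) ^ 2 by
          field_simp]
        rw [Real.sqrt_mul (by positivity), Real.sqrt_sq hnR.le,
          Real.sqrt_mul hM.le]
        ring
      linarith [hbb ▸ ha]
    have h2 : c * T ≤ c * ((n:ℝ) * Real.sqrt M) :=
      mul_le_mul_of_nonneg_left hTnM hc.le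
    rw [ht_def]
    linarith [h1, h2]
  -- Chain
  have hG1 : (n:ℝ) * M * B ≤ X * ((n:ℝ) * Real.sqrt M * t) := by
    calc (n:ℝ) * M * B ≤ c ^ 2 * T ^ 2 - 4 * Real.pi * S := hA2
      _ = (c * T - 2 * u) * (c * T + 2 * u) := hC
      _ ≤ X * (c * T + 2 * u) := by
          apply mul_le_mul_of_nonneg_right hmin'
          positivity
      _ ≤ X * ((n:ℝ) * Real.sqrt M * t) :=
          mul_le_mul_of_nonneg_left hE hX0
  have hG2 : (n:ℝ) * M * B
      ≤ Γ / (4 * Real.pi) * ((n:ℝ) * ((n:ℝ) - 1) * M ^ 2) * ((n:ℝ) * Real.sqrt M * t) := by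
    refine hG1.trans (mul_le_mul_of_nonneg_right hXle ?_)
    positivity
  have hG4 : B ≤ Γ / (4 * Real.pi) * ((n:ℝ) * ((n:ℝ) - 1)) * (M * Real.sqrt M) * t := by
    have hpos : 0 < (n:ℝ) * M := by positivity
    have heq : Γ / (4 * Real.pi) * ((n:ℝ) * ((n:ℝ) - 1) * M ^ 2) * ((n:ℝ) * Real.sqrt M * t)
        = ((n:ℝ) * M) * (Γ / (4 * Real.pi) * ((n:ℝ) * ((n:ℝ) - 1)) * (M * Real.sqrt M) * t) := by
      ring
    have hG3 : ((n:ℝ) * M) * B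
        ≤ ((n:ℝ) * M) * (Γ / (4 * Real.pi) * ((n:ℝ) * ((n:ℝ) - 1)) * (M * Real.sqrt M) * t) := by
      rw [← heq]; exact hG2
    exact le_of_mul_le_mul_left hG3 hpos
  -- conclude
  have hM32 : M ^ ((3:ℝ) / 2) = M * Real.sqrt M := by
    rw [show (3:ℝ)/2 = 1 + 1/2 by norm_num, Real.rpow_add hM, Real.rpow_one,
      ← Real.sqrt_eq_rpow]
  have hden : 0 < (n:ℝ) * ((n:ℝ) - 1) * Γ * t := by
    have : (0:ℝ) < (n:ℝ) - 1 := by linarith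
    positivity
  rw [hM32, div_le_iff₀ hden]
  have h5 : 4 * Real.pi * B
      ≤ 4 * Real.pi * (Γ / (4 * Real.pi) * ((n:ℝ) * ((n:ℝ) - 1)) * (M * Real.sqrt M) * t) :=
    mul_le_mul_of_nonneg_left hG4 (by positivity)
  have h6 : 4 * Real.pi * (Γ / (4 * Real.pi) * ((n:ℝ) * ((n:ℝ) - 1)) * (M * Real.sqrt M) * t)
      = M * Real.sqrt M * ((n:ℝ) * ((n:ℝ) - 1) * Γ * t) := by
    field_simp
  linarith [h6 ▸ h5]
end
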